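/- Let α : ℤ → {0,1} satisfy P_α(n) = 2ⁿ for all positive integers n, and define η : ℤ² → {0,1,2,3} by η(n,k) = α(n) for k ≠ 0 and η(n,0) = α(n) + 2. Then h(e₂) = 0 and h(−e₂) = 0. -/

import Mathlib

open Filter Set

noncomputable section

/-- The plane `ℝ²`. -/
abbrev R2 := EuclideanSpace ℝ (Fin 2)

/-- The embedding of `ℤ²` into `ℝ²`. -/
def toR2 (p : ℤ × ℤ) : R2 := (WithLp.equiv 2 (Fin 2 → ℝ)).symm ![(p.1 : ℝ), (p.2 : ℝ)]

def e1 : R2 := (WithLp.equiv 2 (Fin 2 → ℝ)).symm ![1, 0]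
def e2 : R2 := (WithLp.equiv 2 (Fin 2 → ℝ)).symm ![0, 1]

variable {A : Type*}

/-- The translate `Tⁿη`. -/
def Tr (η : ℤ × ℤ → A) (n : ℤ × ℤ) : ℤ × ℤ → A := fun x => η (x + n)

/-- The number of distinct `η`-colorings of a set `S ⊆ ℤ²`. -/
def colorCount (η : ℤ × ℤ → A) (S : Set (ℤ × ℤ)) : ℕ :=
  Set.ncard {f : S → A | ∃ n : ℤ × ℤ, ∀ x : S, f x = η ((x : ℤ × ℤ) + n)}

/-- The integer points of a subset of the plane. -/
def latticePts (K : Set R2) : Set (ℤ × ℤ) := {p | toR2 p ∈ K}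

/-- The complexity `P_η(K)` for `K ⊆ ℝ²`. -/
def Pc (η : ℤ × ℤ → A) (K : Set R2) : ℕ := colorCount η (latticePts K)

/-- The rectangle complexity `P_η(n,k)`. -/
def Prect (η : ℤ × ℤ → A) (n k : ℕ) : ℕ :=
  colorCount η {p : ℤ × ℤ | 0 ≤ p.1 ∧ p.1 < (n : ℤ) ∧ 0 ≤ p.2 ∧ p.2 < (k : ℤ)}

/-- The `t`-neighborhood `[0, su]^(t)` of the segment `[0, su]`. -/
def segNbhd (u : R2) (s t : ℝ) : Set R2 :=
  {v | ∃ w ∈ segment ℝ (0 : R2) (s • u), dist v w < t}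

/-- The directional entropy `h(u)`. -/
def dirEnt (η : ℤ × ℤ → A) (u : R2) : EReal :=
  ⨆ t : Set.Ioi (0 : ℝ),
    Filter.limsup (fun s : ℝ => ((Real.log (Pc η (segNbhd u s (t : ℝ))) / s : ℝ) : EReal))
      Filter.atTop

/-- `f` agrees on `S` with some translate of `η`. -/
def IsColoring (η : ℤ × ℤ → A) (S : Set (ℤ × ℤ)) (f : ℤ × ℤ → A) : Prop :=
  ∃ n : ℤ × ℤ, ∀ x ∈ S, f x = η (x + n)

/-- The `η`-coloring `f` of `S` extends uniquely to an `η`-coloring of `T`. -/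
def ExtendsUniquely (η : ℤ × ℤ → A) (S T : Set (ℤ × ℤ)) (f : ℤ × ℤ → A) : Prop :=
  (∃ g, IsColoring η T g ∧ ∀ x ∈ S, g x = f x) ∧
    ∀ g g', IsColoring η T g → IsColoring η T g' →
      (∀ x ∈ S, g x = f x) → (∀ x ∈ S, g' x = f x) → ∀ x ∈ T, g x = g' x

/-- `S = conv(S) ∩ ℤ²`. -/
def IsLatticeConvex (S : Set (ℤ × ℤ)) : Prop :=
  ∀ p : ℤ × ℤ, toR2 p ∈ convexHull ℝ (toR2 '' S) → p ∈ S

/-- `x` is `η`-generated by `S`. -/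
def IsGenerated (η : ℤ × ℤ → A) (S : Set (ℤ × ℤ)) (x : ℤ × ℤ) : Prop :=
  ∀ f : ℤ × ℤ → A, IsColoring η (S \ {x}) f → ExtendsUniquely η (S \ {x}) S f

/-- `S` is an `η`-generating set. -/
def IsGeneratingSet (η : ℤ × ℤ → A) (S : Set (ℤ × ℤ)) : Prop :=
  S.Finite ∧ S.Nonempty ∧ IsLatticeConvex S ∧
    ∀ x ∈ S, toR2 x ∈ frontier (convexHull ℝ (toR2 '' S)) → IsGenerated η S x

/-- For `v = (v₁, v₂)`, `perp v = (v₂, -v₁)`. -/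
def perp (v : R2) : R2 := (WithLp.equiv 2 (Fin 2 → ℝ)).symm ![v 1, -(v 0)]

/-- `E_v(S)`: the integer points of the edge of `S` in direction `v`. -/
def edgeSet (v : R2) (S : Set (ℤ × ℤ)) : Set (ℤ × ℤ) :=
  {x ∈ S | ∀ y ∈ S, (inner ℝ (toR2 y) (perp v) : ℝ) ≤ inner ℝ (toR2 x) (perp v)}

/-- `x` is an endpoint of `E_v(S)`. -/
def IsEndpoint (v : R2) (S : Set (ℤ × ℤ)) (x : ℤ × ℤ) : Prop :=
  x ∈ edgeSet v S ∧ toR2 x ∉ convexHull ℝ (toR2 '' (edgeSet v S \ {x}))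

/-- `S` is `v`-balanced for `η`. -/
def IsBalanced (η : ℤ × ℤ → A) (v : R2) (S : Set (ℤ × ℤ)) : Prop :=
  S.Finite ∧ IsLatticeConvex S ∧ S ≠ edgeSet v S ∧
    (∀ x, IsEndpoint v S x → IsGenerated η S x) ∧
    colorCount η S < colorCount η (S \ edgeSet v S) + (edgeSet v S).ncard ∧
    ∀ w : R2, ({x ∈ S | ∃ c : ℝ, toR2 x = w + c • v}).Nonempty →
      (edgeSet v S).ncard ≤ ({x ∈ S | ∃ c : ℝ, toR2 x = w + c • v}).ncard + 1

/-- `J_{T,v,S}`. -/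
def Jset (v : R2) (S T : Set (ℤ × ℤ)) : Set (ℤ × ℤ) :=
  {j | ((fun x => x + j) '' S) \ T = (fun x => x + j) '' edgeSet v S}

/-- `J_{T,v,S,p}`: `J_{T,v,S}` with the `p` points nearest each endpoint removed. -/
def JsetP (v : R2) (S T : Set (ℤ × ℤ)) (p : ℕ) : Set (ℤ × ℤ) :=
  {j ∈ Jset v S T |
    p ≤ ({j' ∈ Jset v S T | (inner ℝ (toR2 j') v : ℝ) < inner ℝ (toR2 j) v}).ncard ∧
    p ≤ ({j' ∈ Jset v S T | (inner ℝ (toR2 j) v : ℝ) < inner ℝ (toR2 j') v}).ncard}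

/-- `ext¹_{v,S,p}(T)`. -/
def ext1 (v : R2) (S : Set (ℤ × ℤ)) (p : ℕ) (T : Set (ℤ × ℤ)) : Set (ℤ × ℤ) :=
  T ∪ ⋃ j ∈ JsetP v S T p, (fun x => x + j) '' S

/-- `ext^m_{v,S,p}(T)`. -/
def extN (v : R2) (S : Set (ℤ × ℤ)) (p : ℕ) (m : ℕ) (T : Set (ℤ × ℤ)) : Set (ℤ × ℤ) :=
  (ext1 v S p)^[m] T

/-- The border `∂_{v,S,p}(T)`. -/
def border (v : R2) (S : Set (ℤ × ℤ)) (p : ℕ) (T : Set (ℤ × ℤ)) : Set (ℤ × ℤ) :=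
  ⋃ j ∈ JsetP v S T p, (fun x => x + j) '' (S \ edgeSet v S)

/-- The integer points of the rectangle `[a,b] × [c,d]`. -/
def rect (a b c d : ℤ) : Set (ℤ × ℤ) := {p | a ≤ p.1 ∧ p.1 ≤ b ∧ c ≤ p.2 ∧ p.2 ≤ d}

/-- `f` is (the restriction to `T` of) an `(S,η)`-coloring. -/
def IsSColoringOf (η : ℤ × ℤ → A) (S T : Set (ℤ × ℤ)) (f : ℤ × ℤ → A) : Prop :=
  ∃ g : ℤ × ℤ → A, (∀ x ∈ T, g x = f x) ∧ ∀ j : ℤ × ℤ, IsColoring η ((fun x => x + j) '' S) g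

/-- `f|_R` extends uniquely to an `(S,η)`-coloring of `T`. -/
def ExtendsUniquelyS (η : ℤ × ℤ → A) (S R T : Set (ℤ × ℤ)) (f : ℤ × ℤ → A) : Prop :=
  (∃ g, IsSColoringOf η S T g ∧ ∀ x ∈ R, g x = f x) ∧
    ∀ g g', IsSColoringOf η S T g → IsSColoringOf η S T g' →
      (∀ x ∈ R, g x = f x) → (∀ x ∈ R, g' x = f x) → ∀ x ∈ T, g x = g' x

/-- `f` is vertically periodic on `X` with period `p`. -/
def VertPeriodicOn (f : ℤ × ℤ → A) (X : Set (ℤ × ℤ)) (p : ℤ) : Prop :=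
  ∀ q : ℤ × ℤ, q ∈ X → q + (0, p) ∈ X → f (q + (0, p)) = f q

/-- The thickness `τ_u(K)` of `K` in direction `u`. -/
def thickness (u : R2) (K : Set R2) : ℝ :=
  sSup {τ : ℝ | 0 ≤ τ ∧ ∃ n : ℤ × ℤ, (fun v => v + toR2 n) '' segment ℝ (0 : R2) (τ • u) ⊆ K}

/-- One-dimensional word complexity `P_α(n)`. -/
def wordCount (α : ℤ → A) (n : ℕ) : ℕ :=
  Set.ncard {w : Fin n → A | ∃ m : ℤ, ∀ j : Fin n, w j = α (m + (j : ℕ))}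

section Topological

variable [TopologicalSpace A]

/-- The orbit closure `X_η` in the product topology. -/
def Xeta (η : ℤ × ℤ → A) : Set (ℤ × ℤ → A) := closure {g | ∃ n : ℤ × ℤ, g = Tr η n}

/-- A line `ℓ ⊆ ℝ²` is expansive for `X_η`. -/
def IsExpansiveLine (η : ℤ × ℤ → A) (ℓ : Set R2) : Prop :=
  ∃ r > 0, ∀ x ∈ Xeta η, ∀ y ∈ Xeta η,
    (∀ n : ℤ × ℤ, Metric.infDist (toR2 n) ℓ < r → x n = y n) → x = y

/-- The line through the origin in direction `u`. -/
def lineThrough (u : R2) : Set R2 := {v | ∃ c : ℝ, v = c • u}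

open Classical in
/-- The metric `ρ` on `𝒜^{ℤ²}`. -/
def rho (x y : ℤ × ℤ → A) : ℝ :=
  if x = y then 0
  else (2 : ℝ) ^ (-(sInf {r : ℝ | ∃ m : ℤ × ℤ, x m ≠ y m ∧ ‖toR2 m‖ = r}))

/-- The covering number `N_T(E, ε)`. -/
def Ncount (η : ℤ × ℤ → A) (E : Set R2) (ε : ℝ) : ℕ :=
  sInf {c : ℕ | ∃ Y : Finset (ℤ × ℤ → A), Y.card = c ∧ ↑Y ⊆ Xeta η ∧
    ∀ x ∈ Xeta η, ∃ y ∈ Y, ∀ n : ℤ × ℤ, toR2 n ∈ E → rho (Tr x n) (Tr y n) < ε}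

end Topological

end

/-! In a vertical strip of width `2t`, a translate of `η` is determined by the window of `α` it
sees in the columns of the strip (boundedly many choices) and by the row of the strip, if any,
that it carries onto the special row `0` (`O(s)` choices for a strip of height `O(s)`). Hence
`P_η([0, ±s e₂]^(t))` grows linearly in `s`, and `log P_η / s → 0`. -/

open Filter Topology

lemma abs_apply_lt_of_mem_segNbhd {u v : R2} {s t : ℝ} (hs : 0 ≤ s) (hv : v ∈ segNbhd u s t)
    (i : Fin 2) : |v i| < s * |u i| + t := by
  obtain ⟨w, hw, hvw⟩ := hv
  rw [segment_eq_image'] at hw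
  obtain ⟨θ, ⟨hθ0, hθ1⟩, rfl⟩ := hw
  have hw_le : |θ * (s * u i)| ≤ s * |u i| := by
    rw [abs_mul, abs_mul, abs_of_nonneg hθ0, abs_of_nonneg hs]
    exact mul_le_of_le_one_left (by positivity) hθ1
  have hvw_i : |v i - θ * (s * u i)| < t := by
    simpa [Real.dist_eq] using (PiLp.dist_apply_le v _ i).trans_lt hvw
  linarith [abs_sub_abs_le_abs_sub (v i) (θ * (s * u i))]

lemma mem_Icc_neg_ceil_of_abs_lt {z : ℤ} {r : ℝ} (h : |(z : ℝ)| < r) :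
    z ∈ Finset.Icc (-⌈r⌉) ⌈r⌉ := by
  rw [abs_lt] at h
  rw [Finset.mem_Icc, neg_le, Int.le_ceil_iff, Int.le_ceil_iff]
  push_cast
  constructor <;> linarith

lemma card_Icc_neg_ceil_le {r : ℝ} (hr : 0 ≤ r) :
    ((Finset.Icc (-⌈r⌉) ⌈r⌉).card : ℝ) ≤ 2 * r + 3 := by
  have hceil : 0 ≤ ⌈r⌉ := Int.ceil_nonneg hr
  rw [Int.card_Icc, show ⌈r⌉ + 1 - -⌈r⌉ = 2 * ⌈r⌉ + 1 by ring, ← Int.cast_natCast, Int.toNat_of_nonneg (by omega)]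
  push_cast
  linarith [Int.ceil_lt_add_one r]

lemma latticePts_segNbhd_subset {u : R2} {s t : ℝ} (hs : 0 ≤ s) :
    latticePts (segNbhd u s t) ⊆
      (Finset.Icc (-⌈s * |u 0| + t⌉) ⌈s * |u 0| + t⌉ : Set ℤ) ×ˢ
        (Finset.Icc (-⌈s * |u 1| + t⌉) ⌈s * |u 1| + t⌉ : Set ℤ) := fun p hp =>
  ⟨mem_Icc_neg_ceil_of_abs_lt (by simpa [toR2] using abs_apply_lt_of_mem_segNbhd hs hp 0),
    mem_Icc_neg_ceil_of_abs_lt (by simpa [toR2] using abs_apply_lt_of_mem_segNbhd hs hp 1)⟩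

variable {A : Type*}

lemma colorCount_eq_ncard_range (η : ℤ × ℤ → A) (S : Set (ℤ × ℤ)) :
    colorCount η S = (Set.range fun n : ℤ × ℤ => fun x : S => η (x + n)).ncard := by
  unfold colorCount
  congr 1
  ext f
  simp [funext_iff, eq_comm]

lemma colorCount_le_card_of_factors {Z : Type*} [Finite Z] (η : ℤ × ℤ → A) (S : Set (ℤ × ℤ))
    (k : ℤ × ℤ → Z) (hk : ∀ n m, k n = k m → ∀ x ∈ S, η (x + n) = η (x + m)) :
    colorCount η S ≤ Nat.card Z := by
  set F := fun n : ℤ × ℤ => fun x : S => η (x + n)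
  have hrange : Set.range F ⊆ Set.range (F ∘ Function.invFun k) := by
    rintro _ ⟨n, rfl⟩
    exact ⟨k n, funext fun x => hk _ _ (Function.invFun_eq ⟨n, rfl⟩) x x.2⟩
  rw [colorCount_eq_ncard_range]
  calc (Set.range F).ncard ≤ (Set.range (F ∘ Function.invFun k)).ncard :=
        Set.ncard_le_ncard hrange (Set.finite_range _)
    _ ≤ Nat.card Z := by rw [← Nat.card_coe_set_eq]; exact Finite.card_range_le _

/-- The row of `Js` that the vertical translation by `n` moves to the row `0`, if there is one. -/
def zeroRowIn (Js : Finset ℤ) (n : ℤ) : Option Js :=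
  if h : -n ∈ Js then some ⟨-n, h⟩ else none

lemma add_eq_zero_of_zeroRowIn_eq {Js : Finset ℤ} {n m y : ℤ} (hy : y ∈ Js)
    (h : zeroRowIn Js n = zeroRowIn Js m) (hn : y + n = 0) : y + m = 0 := by
  obtain rfl : y = -n := by omega
  unfold zeroRowIn at h
  split_ifs at h with hm
  · simp only [Option.some.injEq, Subtype.mk.injEq] at h
    omega

lemma colorCount_le_of_column_factor {B : Type*} [Finite B] (β : ℤ → B) (η : ℤ × ℤ → A)
    (hη : ∀ n n' k k', β n = β n' → (k = 0 ↔ k' = 0) → η (n, k) = η (n', k'))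
    {S : Set (ℤ × ℤ)} {Is Js : Finset ℤ} (hS : S ⊆ (Is : Set ℤ) ×ˢ (Js : Set ℤ)) :
    colorCount η S ≤ (Js.card + 1) * Nat.card B ^ Is.card := by
  have := colorCount_le_card_of_factors η S
    (fun n => (zeroRowIn Js n.2, fun i : Is => β (i + n.1))) fun n m hnm x hx => by
      obtain ⟨hx1, hx2⟩ := hS hx
      simp only [Prod.mk.injEq, funext_iff] at hnm
      exact hη _ _ _ _ (hnm.2 ⟨x.1, hx1⟩)
        ⟨add_eq_zero_of_zeroRowIn_eq hx2 hnm.1, add_eq_zero_of_zeroRowIn_eq hx2 hnm.1.symm⟩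
  simpa [Nat.card_prod, Nat.card_fun] using this

lemma tendsto_log_natCast_div_of_le_mul (g : ℝ → ℕ) (C : ℝ)
    (hg : ∀ᶠ s in atTop, (g s : ℝ) ≤ C * s) :
    Tendsto (fun s => Real.log (g s) / s) atTop (𝓝 0) := by
  set C' := max C 1
  have hlog : Tendsto (fun s => Real.log C' / s + Real.log s / s) atTop (𝓝 0) := by
    simpa using (tendsto_const_nhds.div_atTop tendsto_id).add
      (Real.tendsto_pow_log_div_mul_add_atTop 1 0 1 one_ne_zero)
  refine tendsto_of_tendsto_of_tendsto_of_le_of_le' tendsto_const_nhds hlog ?_ ?_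
  · filter_upwards [eventually_ge_atTop 0] with s hs
    exact div_nonneg (Real.log_natCast_nonneg _) hs
  · filter_upwards [hg, eventually_ge_atTop 1] with s hgs hs
    have hC's : 1 ≤ C' * s := one_le_mul_of_one_le_of_one_le (le_max_right _ _) hs
    have hgs' : Real.log (g s) ≤ Real.log (C' * s) := by
      rcases (g s).eq_zero_or_pos with h0 | hpos
      · simpa [h0] using Real.log_nonneg hC's
      · exact Real.log_le_log (by exact_mod_cast hpos)
          (hgs.trans (mul_le_mul_of_nonneg_right (le_max_left _ _) (by linarith)))
    rw [Real.log_mul (by positivity) (by positivity)] at hgs'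
    rw [← add_div]
    exact div_le_div_of_nonneg_right hgs' (by linarith)

lemma dirEnt_eq_zero_of_tendsto (η : ℤ × ℤ → A) (u : R2)
    (h : ∀ t > 0, Tendsto (fun s => Real.log (Pc η (segNbhd u s t)) / s) atTop (𝓝 0)) :
    dirEnt η u = 0 := by
  have : Nonempty (Set.Ioi (0 : ℝ)) := ⟨⟨1, Set.mem_Ioi.mpr one_pos⟩⟩
  calc dirEnt η u = ⨆ _ : Set.Ioi (0 : ℝ), (0 : EReal) :=
        iSup_congr fun t => (EReal.tendsto_coe.mpr (h t t.2)).limsup_eq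
    _ = 0 := iSup_const

theorem dirEnt_vertical_eq_zero_of_column_factor {B : Type*} [Finite B] (β : ℤ → B) (η : ℤ × ℤ → A)
    (hη : ∀ n n' k k', β n = β n' → (k = 0 ↔ k' = 0) → η (n, k) = η (n', k'))
    {u : R2} (hu : u 0 = 0) : dirEnt η u = 0 := by
  refine dirEnt_eq_zero_of_tendsto η u fun t ht => ?_
  set Is := Finset.Icc (-⌈t⌉) ⌈t⌉
  refine tendsto_log_natCast_div_of_le_mul _ ((2 * |u 1| + 2 * t + 4) * Nat.card B ^ Is.card) ?_
  filter_upwards [eventually_ge_atTop 1] with s hs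
  have hbox := latticePts_segNbhd_subset (u := u) (t := t) (by linarith : (0 : ℝ) ≤ s)
  rw [hu, abs_zero, mul_zero, zero_add] at hbox
  set Js := Finset.Icc (-⌈s * |u 1| + t⌉) ⌈s * |u 1| + t⌉
  have hcount : (Pc η (segNbhd u s t) : ℝ) ≤ ((Js.card : ℝ) + 1) * Nat.card B ^ Is.card := by
    exact_mod_cast colorCount_le_of_column_factor β η hη hbox
  have hJs : (Js.card : ℝ) ≤ 2 * (s * |u 1| + t) + 3 := card_Icc_neg_ceil_le (by positivity)
  calc (Pc η (segNbhd u s t) : ℝ) ≤ ((Js.card : ℝ) + 1) * Nat.card B ^ Is.card := hcount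
    _ ≤ (2 * (s * |u 1| + t) + 4) * Nat.card B ^ Is.card := by gcongr ?_ * _; linarith
    _ ≤ (2 * |u 1| + 2 * t + 4) * Nat.card B ^ Is.card * s := by
        rw [mul_right_comm]
        gcongr
        nlinarith [abs_nonneg (u 1)]

theorem stmt16_general (α : ℤ → Fin 4)
    (η : ℤ × ℤ → Fin 4)
    (hη : ∀ n k : ℤ, (k ≠ 0 → η (n, k) = α n) ∧ η (n, 0) = α n + 2) :
    dirEnt η e2 = 0 ∧ dirEnt η (-e2) = 0 := by
  have hrow : ∀ n n' k k', α n = α n' → (k = 0 ↔ k' = 0) → η (n, k) = η (n', k') := by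
    intro n n' k k' hn hk
    by_cases hk0 : k = 0
    · rw [hk0, hk.1 hk0, (hη n 0).2, (hη n' 0).2, hn]
    · rw [(hη n k).1 hk0, (hη n' k').1 (mt hk.2 hk0), hn]
  exact ⟨dirEnt_vertical_eq_zero_of_column_factor α η hrow (by simp [e2]),
    dirEnt_vertical_eq_zero_of_column_factor α η hrow (by simp [e2])⟩

/-- zero directional entropy in the vertical directions. -/
theorem stmt16 (α : ℤ → Fin 4) (hα01 : ∀ x : ℤ, α x = 0 ∨ α x = 1)
    (hα : ∀ n : ℕ, 0 < n → wordCount α n = 2 ^ n)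
    (η : ℤ × ℤ → Fin 4)
    (hη : ∀ n k : ℤ, (k ≠ 0 → η (n, k) = α n) ∧ η (n, 0) = α n + 2) :
    dirEnt η e2 = 0 ∧ dirEnt η (-e2) = 0 :=
  stmt16_general α η hη
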